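/- Off-diagonal mean value decomposition bound: let r > 0 and x0, y0 ∈ ℝ^n with dist(B_r(x0), B_r(y0)) ≥ γ r for some γ ∈ (0,1]. Then for any u ∈ L^2(B_r(x0) ∪ B_r(y0)), the difference of averages satisfies |ū_{B_r(x0)} − ū_{B_r(y0)}| ≤ C d^{α+θ_α} ( ⨍_{B_r(x0)×B_r(y0)} U_α^2 dμ_α )^{1/2}, where d = dist(B_r(x0), B_r(y0)), U_α(x,y) = |u(x)−u(y)|/|x−y|^{α+θ_α}, μ_α has density |x−y|^{2θ_α−n}, α+θ_α > 0, θ_α ∈ (0,1/2), and C = C(n,γ,θ_α) ≥ 1. -/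

import Mathlib

/-!
On `B_r(x₀) × B_r(y₀)` the distance `|x - y|` stays between `d` and `(1 + 4/γ) d`, so the density
`|x - y|^{2θ_α - n}` of `μ_α` is comparable there to a constant and Lebesgue and `μ_α` averages
over the product agree up to the factor `(1 + 4/γ)^{n - 2θ_α}`. The difference of the two ball
averages is the average of `u x - u y` over the product, and
`|u x - u y| ≤ ((1 + 4/γ) d)^{α+θ_α} U_α(x, y)` there; Cauchy–Schwarz for the `μ_α`-average of
`U_α` finishes the proof.
-/

open MeasureTheory Metric Set

/-- The measure `μ_α` on `ℝⁿ × ℝⁿ` with density `|x-y|^{2θ_α-n}`. -/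
noncomputable def mu (n : ℕ) (θ : ℝ) :
    Measure (EuclideanSpace ℝ (Fin n) × EuclideanSpace ℝ (Fin n)) :=
  volume.withDensity fun p => ENNReal.ofReal (‖p.1 - p.2‖ ^ (2 * θ - (n : ℝ)))

/-- The distance between two sets: `dist(A,B) = inf {dist a b : a ∈ A, b ∈ B}`. -/
noncomputable def setDist {α : Type*} [PseudoMetricSpace α] (A B : Set α) : ℝ :=
  sInf ((fun p : α × α => dist p.1 p.2) '' A ×ˢ B)

open scoped ENNReal

section SetDist

variable {X : Type*} [PseudoMetricSpace X]

theorem setDist_le_dist {A B : Set X} {a b : X} (ha : a ∈ A) (hb : b ∈ B) :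
    setDist A B ≤ dist a b :=
  csInf_le ⟨0, by rintro _ ⟨p, -, rfl⟩; exact dist_nonneg⟩ ⟨(a, b), ⟨ha, hb⟩, rfl⟩

theorem dist_le_setDist_ball_add {x y a b : X} {r : ℝ} (ha : a ∈ ball x r) (hb : b ∈ ball y r) :
    dist a b ≤ setDist (ball x r) (ball y r) + 4 * r := by
  have hcenters : dist x y - 2 * r ≤ setDist (ball x r) (ball y r) := by
    refine le_csInf ⟨_, (a, b), ⟨ha, hb⟩, rfl⟩ ?_
    rintro _ ⟨⟨a', b'⟩, ⟨ha', hb'⟩, rfl⟩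
    rw [mem_ball'] at ha'
    rw [mem_ball] at hb'
    linarith [dist_triangle4 x a' b' y]
  rw [mem_ball] at ha
  rw [mem_ball'] at hb
  linarith [dist_triangle4 a x y b]

theorem dist_le_mul_setDist_ball {x y a b : X} {r γ : ℝ} (hγ : 0 < γ)
    (hγd : γ * r ≤ setDist (ball x r) (ball y r)) (ha : a ∈ ball x r) (hb : b ∈ ball y r) :
    dist a b ≤ (1 + 4 / γ) * setDist (ball x r) (ball y r) := by
  have : 4 * r ≤ 4 / γ * setDist (ball x r) (ball y r) := by
    rw [div_mul_eq_mul_div, le_div_iff₀ hγ]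
    linarith
  linarith [dist_le_setDist_ball_add ha hb]

end SetDist

section Averages

variable {α β : Type*} [MeasurableSpace α] [MeasurableSpace β]

theorem average_sub_average_eq_average_prod {μ : Measure α} {ν : Measure β}
    [IsFiniteMeasure μ] [IsFiniteMeasure ν] [NeZero μ] [NeZero ν] {f : α → ℝ} {g : β → ℝ}
    (hf : Integrable f μ) (hg : Integrable g ν) :
    ⨍ x, f x ∂μ - ⨍ y, g y ∂ν = ⨍ p, (f p.1 - g p.2) ∂μ.prod ν := by
  have hμ := (measureReal_univ_pos (μ := μ)).ne'
  have hν := (measureReal_univ_pos (μ := ν)).ne'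
  rw [average_eq, average_eq, average_eq, integral_sub (hf.comp_fst ν) (hg.comp_snd μ),
    integral_fun_fst, integral_fun_snd, ← univ_prod_univ, measureReal_prod_prod]
  simp only [smul_eq_mul]
  field_simp

theorem ofReal_abs_average_sub_average_le {μ : Measure α} {ν : Measure β}
    [IsFiniteMeasure μ] [IsFiniteMeasure ν] [NeZero μ] [NeZero ν] {f : α → ℝ} {g : β → ℝ}
    (hf : Integrable f μ) (hg : Integrable g ν) :
    ENNReal.ofReal |⨍ x, f x ∂μ - ⨍ y, g y ∂ν|
      ≤ ⨍⁻ p, ENNReal.ofReal |f p.1 - g p.2| ∂μ.prod ν := by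
  have hint : Integrable (fun p : α × β => f p.1 - g p.2) (μ.prod ν) :=
    (hf.comp_fst ν).sub (hg.comp_snd μ)
  calc ENNReal.ofReal |⨍ x, f x ∂μ - ⨍ y, g y ∂ν|
      ≤ ENNReal.ofReal (⨍ p, |f p.1 - g p.2| ∂μ.prod ν) := by
        rw [average_sub_average_eq_average_prod hf hg, average_eq, average_eq, smul_eq_mul,
          smul_eq_mul, abs_mul, abs_of_nonneg (by positivity)]
        gcongr
        exact abs_integral_le_integral_abs
    _ = ⨍⁻ p, ENNReal.ofReal |f p.1 - g p.2| ∂μ.prod ν := by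
        rw [ofReal_average hint.abs (ae_of_all _ fun _ => abs_nonneg _), laverage_eq]

theorem laverage_const_mul {μ : Measure α} {c : ℝ≥0∞} (hc : c ≠ ∞) (f : α → ℝ≥0∞) :
    ⨍⁻ x, c * f x ∂μ = c * ⨍⁻ x, f x ∂μ := by
  simp only [laverage_eq, lintegral_const_mul' c f hc, mul_div_assoc]

theorem laverage_le_laverage_rpow_two_rpow_half {μ : Measure α} {f : α → ℝ≥0∞}
    (hf : AEMeasurable f μ) :
    ⨍⁻ x, f x ∂μ ≤ (⨍⁻ x, f x ^ (2 : ℝ) ∂μ) ^ (1 / 2 : ℝ) := by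
  set P := (μ univ)⁻¹ • μ
  -- `P` is a probability measure, or zero when `μ univ` is `0` or `∞`
  have hP : P univ ≤ 1 := ENNReal.inv_mul_le_one _
  have holder := ENNReal.lintegral_mul_le_Lp_mul_Lq P Real.HolderConjugate.two_two
    (hf.smul_measure _) (aemeasurable_const (b := (1 : ℝ≥0∞)))
  simp only [Pi.mul_apply, mul_one, ENNReal.one_rpow, lintegral_const, one_mul] at holder
  simp only [laverage_eq']
  calc ∫⁻ x, f x ∂P ≤ (∫⁻ x, f x ^ (2 : ℝ) ∂P) ^ (1 / 2 : ℝ) * P univ ^ (1 / 2 : ℝ) := holder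
    _ ≤ (∫⁻ x, f x ^ (2 : ℝ) ∂P) ^ (1 / 2 : ℝ) := by
      grw [hP, ENNReal.one_rpow, mul_one]

theorem setLAverage_le_mul_setLAverage_withDensity {ν : Measure α} {w f : α → ℝ≥0∞}
    {S : Set α} {c C : ℝ} (hw : Measurable w) (hf : Measurable f) (hS : MeasurableSet S)
    (hc : 0 < c) (hC : 0 < C) (hwc : ∀ x ∈ S, ENNReal.ofReal c ≤ w x)
    (hwC : ∀ x ∈ S, w x ≤ ENNReal.ofReal C) :
    ⨍⁻ x in S, f x ∂ν ≤ ENNReal.ofReal (C / c) * ⨍⁻ x in S, f x ∂ν.withDensity w := by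
  set μ := ν.withDensity w
  have hc0 : ENNReal.ofReal c ≠ 0 := ENNReal.ofReal_ne_zero_iff.mpr hc
  have hC0 : ENNReal.ofReal C ≠ 0 := ENNReal.ofReal_ne_zero_iff.mpr hC
  have hlint : ∫⁻ x in S, f x ∂ν ≤ (ENNReal.ofReal c)⁻¹ * ∫⁻ x in S, f x ∂μ := by
    rw [setLIntegral_withDensity_eq_setLIntegral_mul _ hw hf hS,
      ← lintegral_const_mul' _ _ (ENNReal.inv_ne_top.mpr hc0)]
    refine setLIntegral_mono ((hw.mul hf).const_mul _) fun x hx => ?_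
    calc f x = 1 * f x := (one_mul _).symm
      _ ≤ (ENNReal.ofReal c)⁻¹ * w x * f x := by
        gcongr
        exact (ENNReal.mul_le_iff_le_inv hc0 ENNReal.ofReal_ne_top).mp (by simpa using hwc x hx)
      _ = _ := by simp only [Pi.mul_apply, mul_assoc]
  have hmeas : μ S ≤ ENNReal.ofReal C * ν S := by
    rw [withDensity_apply _ hS, ← setLIntegral_const]
    exact setLIntegral_mono measurable_const hwC
  have hinv : (ν S)⁻¹ ≤ ENNReal.ofReal C * (μ S)⁻¹ := by
    rw [ENNReal.inv_le_iff_inv_le, ENNReal.mul_inv (.inl hC0) (.inl ENNReal.ofReal_ne_top),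
      inv_inv, ENNReal.mul_le_iff_le_inv (ENNReal.inv_ne_zero.mpr ENNReal.ofReal_ne_top)
        (ENNReal.inv_ne_top.mpr hC0), inv_inv]
    exact hmeas
  rw [setLAverage_eq, setLAverage_eq, ENNReal.div_eq_inv_mul, ENNReal.div_eq_inv_mul,
    ENNReal.ofReal_div_of_pos hc, ENNReal.div_eq_inv_mul]
  calc (ν S)⁻¹ * ∫⁻ x in S, f x ∂ν
      ≤ (ENNReal.ofReal C * (μ S)⁻¹) * ((ENNReal.ofReal c)⁻¹ * ∫⁻ x in S, f x ∂μ) := by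
        gcongr
    _ = _ := by ring

end Averages

section DifferenceQuotient

variable {E : Type*} [NormedAddCommGroup E]

theorem abs_sub_le_rpow_mul_div_rpow (u : E → ℝ) {x y : E} {s R : ℝ} (hs : 0 ≤ s)
    (hR : ‖x - y‖ ≤ R) :
    |u x - u y| ≤ R ^ s * (|u x - u y| / ‖x - y‖ ^ s) := by
  rcases eq_or_ne (‖x - y‖ ^ s) 0 with h | h
  · rw [Real.rpow_eq_zero_iff_of_nonneg (norm_nonneg _), norm_eq_zero, sub_eq_zero] at h
    simp [h.1]
  · calc |u x - u y| = ‖x - y‖ ^ s * (|u x - u y| / ‖x - y‖ ^ s) := by field_simp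
      _ ≤ R ^ s * (|u x - u y| / ‖x - y‖ ^ s) := by gcongr

theorem ofReal_abs_setAverage_sub_setAverage_le [MeasurableSpace E] {μ : Measure E} [SFinite μ]
    {A B : Set E}
    (hA : MeasurableSet A) (hB : MeasurableSet B) (hA0 : μ A ≠ 0) (hAt : μ A ≠ ∞)
    (hB0 : μ B ≠ 0) (hBt : μ B ≠ ∞) {u : E → ℝ} (huA : IntegrableOn u A μ)
    (huB : IntegrableOn u B μ) {s R : ℝ} (hs : 0 ≤ s)
    (hR : ∀ q ∈ A ×ˢ B, ‖q.1 - q.2‖ ≤ R) :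
    ENNReal.ofReal |(⨍ x in A, u x ∂μ) - ⨍ y in B, u y ∂μ|
      ≤ ENNReal.ofReal (R ^ s) *
        ⨍⁻ q in A ×ˢ B, ENNReal.ofReal (|u q.1 - u q.2| / ‖q.1 - q.2‖ ^ s) ∂μ.prod μ := by
  have := isFiniteMeasure_restrict.mpr hAt
  have := isFiniteMeasure_restrict.mpr hBt
  have : NeZero (μ A) := ⟨hA0⟩
  have : NeZero (μ B) := ⟨hB0⟩
  rw [← laverage_const_mul ENNReal.ofReal_ne_top]
  refine (ofReal_abs_average_sub_average_le huA huB).trans ?_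
  rw [Measure.prod_restrict]
  refine laverage_mono_ae <| ae_restrict_of_forall_mem (hA.prod hB) fun q hq => ?_
  dsimp only
  rw [← ENNReal.ofReal_mul (Real.rpow_nonneg ((norm_nonneg _).trans (hR q hq)) _)]
  exact ENNReal.ofReal_le_ofReal (abs_sub_le_rpow_mul_div_rpow u hs (hR q hq))

theorem ofReal_abs_setAverage_ball_sub_setAverage_ball_le [MeasurableSpace E]
    [OpensMeasurableSpace E] [ProperSpace E] {μ : Measure E} [SFinite μ]
    [IsFiniteMeasureOnCompacts μ] [μ.IsOpenPosMeasure] {x y : E} {r : ℝ} (hr : 0 < r)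
    {u : E → ℝ} (hu : IntegrableOn u (ball x r ∪ ball y r) μ) {s R : ℝ} (hs : 0 ≤ s)
    (hR : ∀ q ∈ ball x r ×ˢ ball y r, ‖q.1 - q.2‖ ≤ R) :
    ENNReal.ofReal |(⨍ z in ball x r, u z ∂μ) - ⨍ z in ball y r, u z ∂μ|
      ≤ ENNReal.ofReal (R ^ s) * ⨍⁻ q in ball x r ×ˢ ball y r,
          ENNReal.ofReal (|u q.1 - u q.2| / ‖q.1 - q.2‖ ^ s) ∂μ.prod μ :=
  ofReal_abs_setAverage_sub_setAverage_le measurableSet_ball measurableSet_ball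
    (measure_ball_pos μ x hr).ne' measure_ball_lt_top.ne (measure_ball_pos μ y hr).ne'
    measure_ball_lt_top.ne hu.left_of_union hu.right_of_union hs hR

end DifferenceQuotient

theorem setLAverage_volume_le_mul_setLAverage_mu {n : ℕ} {θ : ℝ} (hθ : 2 * θ - n ≤ 0)
    {S : Set (EuclideanSpace ℝ (Fin n) × EuclideanSpace ℝ (Fin n))} (hS : MeasurableSet S)
    {d K : ℝ} (hd : 0 < d) (hK : 0 < K)
    (hdist : ∀ q ∈ S, d ≤ ‖q.1 - q.2‖ ∧ ‖q.1 - q.2‖ ≤ K * d)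
    {F : EuclideanSpace ℝ (Fin n) × EuclideanSpace ℝ (Fin n) → ℝ≥0∞} (hF : Measurable F) :
    ⨍⁻ q in S, F q ∂volume ≤ ENNReal.ofReal (K ^ (n - 2 * θ)) * ⨍⁻ q in S, F q ∂mu n θ := by
  have hratio : d ^ (2 * θ - n) / (K * d) ^ (2 * θ - n) = K ^ (n - 2 * θ) := by
    rw [Real.mul_rpow hK.le hd.le, show n - 2 * θ = -(2 * θ - n) by ring, Real.rpow_neg hK.le]
    field_simp
  rw [← hratio]
  exact setLAverage_le_mul_setLAverage_withDensity (by fun_prop) hF hS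
    (Real.rpow_pos_of_pos (mul_pos hK hd) _) (Real.rpow_pos_of_pos hd _)
    (fun q hq => ENNReal.ofReal_le_ofReal <| Real.rpow_le_rpow_of_nonpos
      (hd.trans_le (hdist q hq).1) (hdist q hq).2 hθ)
    (fun q hq => ENNReal.ofReal_le_ofReal <| Real.rpow_le_rpow_of_nonpos hd (hdist q hq).1 hθ)

/-- Off-diagonal mean value decomposition bound: if `dist(B_r(x₀),B_r(y₀)) ≥ γr`, then
`|ū_{B_r(x₀)} - ū_{B_r(y₀)}| ≤ C d^{α+θ_α} (⨍_{B_r(x₀)×B_r(y₀)} U_α² dμ_α)^{1/2}`, where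
`U_α(x,y) = |u(x)-u(y)|/|x-y|^{α+θ_α}` and `C = C(n,γ,θ_α) ≥ 1`. -/
theorem stmt_12 (n : ℕ) (hn : 1 ≤ n) (a θa : ℝ) (hθ : θa ∈ Ioo (0 : ℝ) (1 / 2))
    (ha : 0 < a + θa) (γ : ℝ) (hγ : γ ∈ Ioc (0 : ℝ) 1) :
    ∃ C : ℝ, 1 ≤ C ∧ ∀ (r : ℝ) (x0 y0 : EuclideanSpace ℝ (Fin n))
      (u : EuclideanSpace ℝ (Fin n) → ℝ), 0 < r →
      γ * r ≤ setDist (ball x0 r) (ball y0 r) → Measurable u →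
      MemLp u 2 (volume.restrict (ball x0 r ∪ ball y0 r)) →
      ENNReal.ofReal |(⨍ x in ball x0 r, u x) - ⨍ y in ball y0 r, u y|
        ≤ ENNReal.ofReal (C * setDist (ball x0 r) (ball y0 r) ^ (a + θa)) *
          ((mu n θa (ball x0 r ×ˢ ball y0 r))⁻¹ *
            ∫⁻ q in ball x0 r ×ˢ ball y0 r,
              ENNReal.ofReal
                ((|u q.1 - u q.2| / ‖q.1 - q.2‖ ^ (a + θa)) ^ (2 : ℝ)) ∂mu n θa) ^
            (1 / 2 : ℝ) := by
  set K : ℝ := 1 + 4 / γ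
  have hK : 1 ≤ K := le_add_of_nonneg_right (div_nonneg zero_le_four hγ.1.le)
  have hweight : 2 * θa - n ≤ 0 := by
    have : (1 : ℝ) ≤ n := by exact_mod_cast hn
    linarith [hθ.2]
  refine ⟨K ^ (a + θa + (n - 2 * θa)), Real.one_le_rpow hK (by linarith), ?_⟩
  intro r x0 y0 u hr hγd hu hu2
  set d := setDist (ball x0 r) (ball y0 r)
  set S := ball x0 r ×ˢ ball y0 r
  set F := fun q : EuclideanSpace ℝ (Fin n) × EuclideanSpace ℝ (Fin n) =>
    ENNReal.ofReal (|u q.1 - u q.2| / ‖q.1 - q.2‖ ^ (a + θa))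
  have hd : 0 < d := (mul_pos hγ.1 hr).trans_le hγd
  have hdist (q) (hq : q ∈ S) : d ≤ ‖q.1 - q.2‖ ∧ ‖q.1 - q.2‖ ≤ K * d := by
    rw [← dist_eq_norm]
    exact ⟨setDist_le_dist hq.1 hq.2, dist_le_mul_setDist_ball hγ.1 hγd hq.1 hq.2⟩
  have hu1 : IntegrableOn u (ball x0 r ∪ ball y0 r) :=
    haveI : IsFiniteMeasure (volume.restrict (ball x0 r ∪ ball y0 r)) :=
      isFiniteMeasure_restrict.mpr
        (measure_union_lt_top measure_ball_lt_top measure_ball_lt_top).ne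
    hu2.integrable one_le_two
  have hmean := ofReal_abs_setAverage_ball_sub_setAverage_ball_le hr hu1 ha.le
    fun q hq => (hdist q hq).2
  have hF : Measurable F := by fun_prop
  have hdens := setLAverage_volume_le_mul_setLAverage_mu hweight
    (measurableSet_ball.prod measurableSet_ball) hd (by positivity) hdist hF
  have hholder := laverage_le_laverage_rpow_two_rpow_half (μ := (mu n θa).restrict S)
    hF.aemeasurable
  have hsq : (mu n θa S)⁻¹ * ∫⁻ q in S, ENNReal.ofReal
        ((|u q.1 - u q.2| / ‖q.1 - q.2‖ ^ (a + θa)) ^ (2 : ℝ)) ∂mu n θa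
      = ⨍⁻ q in S, F q ^ (2 : ℝ) ∂mu n θa := by
    rw [setLAverage_eq, ENNReal.div_eq_inv_mul]
    congr 1
    exact lintegral_congr fun q =>
      (ENNReal.ofReal_rpow_of_nonneg (by positivity) zero_le_two).symm
  have hconst : K ^ (a + θa + (n - 2 * θa)) * d ^ (a + θa)
      = (K * d) ^ (a + θa) * K ^ (n - 2 * θa) := by
    rw [Real.mul_rpow (by positivity) hd.le, Real.rpow_add (by positivity)]
    ring
  rw [hsq, hconst, ENNReal.ofReal_mul (by positivity), mul_assoc]
  grw [hmean, ← Measure.volume_eq_prod, hdens, hholder]
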